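/- arXiv:1605.07145 — 3 statements merged into one kernel-verified Lean document; each statement's English description precedes it below -/
import Mathlib

section
/- Let p ∈ (0,1), a ∈ ℝ, a ≠ 0, and define g(t) = −t p a + ln(1 − p + p e^{t a}) for t ∈ ℝ. Then g(0) = 0, g′(0) = 0, and g″(t) ≤ a²/4 for all t ∈ ℝ. -/
/-!
Writing `u = 1 - p` and `v = p e^{ta}`, two differentiations give `g″(t) = a² · u v / (u + v)²`,
and `4 u v ≤ (u + v)²` is AM–GM.
-/

open Real

noncomputable def bernoulliCGF (p a t : ℝ) : ℝ := -t * p * a + log (1 - p + p * exp (t * a))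

lemma mul_div_add_sq_le_one_fourth (u v : ℝ) : u * v / (u + v) ^ 2 ≤ 1 / 4 := by
  rcases eq_or_ne (u + v) 0 with huv | huv
  · simp [huv]
  · rw [div_le_iff₀ (by positivity)]
    linarith [four_mul_le_sq_add u v]

section BernoulliCGF

variable {p : ℝ} (hp0 : 0 ≤ p) (hp1 : p ≤ 1) (a : ℝ)
include hp0 hp1

lemma one_sub_add_mul_exp_pos (x : ℝ) : 0 < 1 - p + p * exp x := by
  rcases hp1.lt_or_eq with hp1 | rfl
  · have := exp_pos x
    nlinarith
  · simpa using exp_pos x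

lemma hasDerivAt_bernoulliCGF (t : ℝ) :
    HasDerivAt (bernoulliCGF p a)
      (-(p * a) + p * a * exp (t * a) / (1 - p + p * exp (t * a))) t := by
  have hexp : HasDerivAt (fun t => exp (t * a)) (exp (t * a) * a) t :=
    (hasDerivAt_mul_const a).exp
  have hlog := ((hexp.const_mul p).const_add (1 - p)).log
    (one_sub_add_mul_exp_pos hp0 hp1 _).ne'
  have hlin : HasDerivAt (fun t => -t * p * a) (-(p * a)) t := by
    simpa [mul_assoc] using ((hasDerivAt_id t).neg.mul_const (p * a))
  exact (hlin.add hlog).congr_deriv (by ring)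

lemma deriv_bernoulliCGF :
    deriv (bernoulliCGF p a) =
      fun t => -(p * a) + p * a * exp (t * a) / (1 - p + p * exp (t * a)) :=
  funext fun t => (hasDerivAt_bernoulliCGF hp0 hp1 a t).deriv

lemma hasDerivAt_deriv_bernoulliCGF (t : ℝ) :
    HasDerivAt (deriv (bernoulliCGF p a))
      (a ^ 2 * ((1 - p) * (p * exp (t * a)) / (1 - p + p * exp (t * a)) ^ 2)) t := by
  rw [deriv_bernoulliCGF hp0 hp1 a]
  have hexp : HasDerivAt (fun t => exp (t * a)) (exp (t * a) * a) t :=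
    (hasDerivAt_mul_const a).exp
  have hquot := (hexp.const_mul (p * a)).div ((hexp.const_mul p).const_add (1 - p))
    (one_sub_add_mul_exp_pos hp0 hp1 _).ne'
  exact (hquot.const_add _).congr_deriv (by ring)

lemma deriv_deriv_bernoulliCGF_le (t : ℝ) : deriv (deriv (bernoulliCGF p a)) t ≤ a ^ 2 / 4 := by
  rw [(hasDerivAt_deriv_bernoulliCGF hp0 hp1 a t).deriv]
  calc _ ≤ a ^ 2 * (1 / 4) :=
        mul_le_mul_of_nonneg_left (mul_div_add_sq_le_one_fourth _ _) (sq_nonneg a)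
    _ = a ^ 2 / 4 := by ring

end BernoulliCGF

theorem bernoulli_cgf_properties_general (p a : ℝ) (hp : p ∈ Set.Ioo (0 : ℝ) 1) :
    (fun t : ℝ => -t * p * a + Real.log (1 - p + p * Real.exp (t * a))) 0 = 0 ∧
    deriv (fun t : ℝ => -t * p * a + Real.log (1 - p + p * Real.exp (t * a))) 0 = 0 ∧
    ∀ t : ℝ, deriv (deriv
      (fun t : ℝ => -t * p * a + Real.log (1 - p + p * Real.exp (t * a)))) t ≤ a ^ 2 / 4 := by
  change bernoulliCGF p a 0 = 0 ∧ deriv (bernoulliCGF p a) 0 = 0 ∧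
    ∀ t, deriv (deriv (bernoulliCGF p a)) t ≤ a ^ 2 / 4
  refine ⟨by simp [bernoulliCGF], ?_, deriv_deriv_bernoulliCGF_le hp.1.le hp.2.le a⟩
  rw [deriv_bernoulliCGF hp.1.le hp.2.le a]
  simp

theorem bernoulli_cgf_properties (p a : ℝ) (hp : p ∈ Set.Ioo (0 : ℝ) 1) (ha : a ≠ 0) :
    (fun t : ℝ => -t * p * a + Real.log (1 - p + p * Real.exp (t * a))) 0 = 0 ∧
    deriv (fun t : ℝ => -t * p * a + Real.log (1 - p + p * Real.exp (t * a))) 0 = 0 ∧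
    ∀ t : ℝ, deriv (deriv
      (fun t : ℝ => -t * p * a + Real.log (1 - p + p * Real.exp (t * a)))) t ≤ a ^ 2 / 4 :=
  bernoulli_cgf_properties_general p a hp
end

section
/- (Welch bound consequence) If W ∈ ℝ^{m×n} with m > n has unit-norm rows Wᵢ, then max_{i≠j} |Wᵢᵀ Wⱼ| ≥ √((m − n)/(n(m − 1))). -/
lemma sum_swap4 {α β : Type*} [Fintype α] [Fintype β] (f : α → α → β → β → ℝ) :
    ∑ i, ∑ j, ∑ k, ∑ l, f i j k l = ∑ k, ∑ l, ∑ i, ∑ j, f i j k l :=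
  calc ∑ i, ∑ j, ∑ k, ∑ l, f i j k l
      = ∑ i, ∑ k, ∑ j, ∑ l, f i j k l :=
        Finset.sum_congr rfl fun i _ => Finset.sum_comm
    _ = ∑ k, ∑ i, ∑ j, ∑ l, f i j k l := Finset.sum_comm
    _ = ∑ k, ∑ i, ∑ l, ∑ j, f i j k l :=
        Finset.sum_congr rfl fun k _ =>
          Finset.sum_congr rfl fun i _ => Finset.sum_comm
    _ = ∑ k, ∑ l, ∑ i, ∑ j, f i j k l :=
        Finset.sum_congr rfl fun k _ => Finset.sum_comm

theorem welch_bound {m n : ℕ} (hmn : n < m) (W : Matrix (Fin m) (Fin n) ℝ)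
    (hunit : ∀ i, ∑ k, (W i k) ^ 2 = 1) :
    ∃ i j : Fin m, i ≠ j ∧
      Real.sqrt (((m : ℝ) - n) / (n * ((m : ℝ) - 1))) ≤ |∑ k, W i k * W j k| := by
  have hm0 : 0 < m := lt_of_le_of_lt (Nat.zero_le n) hmn
  have hn0 : 0 < n := by
    rcases Nat.eq_zero_or_pos n with h | h
    · exfalso
      have := hunit ⟨0, hm0⟩
      subst h
      simp at this
    · exact h
  have hm2 : 2 ≤ m := by omega
  set g : Fin m → Fin m → ℝ := fun i j => ∑ k, W i k * W j k with hg
  set a : Fin n → Fin n → ℝ := fun k l => ∑ i, W i k * W i l with ha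
  have hgd : ∀ i, g i i = 1 := by
    intro i; simpa [hg, ← sq] using hunit i
  -- quadruple sum identity
  have h1 : (∑ i, ∑ j, (g i j) ^ 2) = ∑ k, ∑ l, (a k l) ^ 2 := by
    have L : ∀ i j : Fin m, (g i j) ^ 2
        = ∑ k, ∑ l, (W i k * W j k) * (W i l * W j l) := by
      intro i j; rw [hg, sq, Finset.sum_mul_sum]
    have R : ∀ k l : Fin n, (a k l) ^ 2
        = ∑ i, ∑ j, (W i k * W i l) * (W j k * W j l) := by
      intro k l; rw [ha, sq, Finset.sum_mul_sum]
    simp only [L, R]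
    rw [sum_swap4]
    refine Finset.sum_congr rfl fun k _ => Finset.sum_congr rfl fun l _ =>
      Finset.sum_congr rfl fun i _ => Finset.sum_congr rfl fun j _ => by ring
  -- trace of a is m
  have h2 : (∑ k, a k k) = (m : ℝ) := by
    rw [ha]
    simp only
    rw [Finset.sum_comm]
    simp [← sq, hunit]
  -- Cauchy–Schwarz on the diagonal of a
  have h3 : (m : ℝ) ^ 2 ≤ (n : ℝ) * ∑ k, (a k k) ^ 2 := by
    have := sq_sum_le_card_mul_sum_sq (s := (Finset.univ : Finset (Fin n)))
      (f := fun k => a k k)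
    rw [h2] at this
    simpa using this
  -- diagonal squares bounded by all squares
  have h4 : (∑ k, (a k k) ^ 2) ≤ ∑ k, ∑ l, (a k l) ^ 2 := by
    refine Finset.sum_le_sum fun k _ => ?_
    refine Finset.single_le_sum (fun l _ => sq_nonneg (a k l)) (Finset.mem_univ k)
  have h5 : (m : ℝ) ^ 2 ≤ (n : ℝ) * ∑ i, ∑ j, (g i j) ^ 2 := by
    rw [h1]
    calc (m : ℝ) ^ 2 ≤ (n : ℝ) * ∑ k, (a k k) ^ 2 := h3
      _ ≤ (n : ℝ) * ∑ k, ∑ l, (a k l) ^ 2 := by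
          exact mul_le_mul_of_nonneg_left h4 (Nat.cast_nonneg n)
  -- split into diagonal and off-diagonal
  have hsplit : (∑ i, ∑ j, (g i j) ^ 2)
      = (m : ℝ) + ∑ p ∈ (Finset.univ : Finset (Fin m)).offDiag, (g p.1 p.2) ^ 2 := by
    rw [← Finset.sum_product']
    rw [← Finset.diag_union_offDiag (Finset.univ : Finset (Fin m)),
      Finset.sum_union (Finset.disjoint_diag_offDiag _), Finset.sum_diag]
    simp [hgd]
  -- pick the maximizer
  have hne : ((Finset.univ : Finset (Fin m)).offDiag).Nonempty := by
    refine ⟨(⟨0, by omega⟩, ⟨1, by omega⟩), ?_⟩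
    simp [Finset.mem_offDiag, Fin.ext_iff]
  obtain ⟨p, hp, hmax⟩ := Finset.exists_max_image _ (fun p => (g p.1 p.2) ^ 2) hne
  obtain ⟨_, _, hij⟩ := Finset.mem_offDiag.mp hp
  refine ⟨p.1, p.2, hij, ?_⟩
  -- bound the off-diagonal sum by card * max
  have hcard : ((Finset.univ : Finset (Fin m)).offDiag).card = m * m - m := by
    simp [Finset.offDiag_card]
  have h6 : (∑ q ∈ (Finset.univ : Finset (Fin m)).offDiag, (g q.1 q.2) ^ 2)
      ≤ ((m : ℝ) * m - m) * (g p.1 p.2) ^ 2 := by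
    calc (∑ q ∈ (Finset.univ : Finset (Fin m)).offDiag, (g q.1 q.2) ^ 2)
        ≤ ∑ _q ∈ (Finset.univ : Finset (Fin m)).offDiag, (g p.1 p.2) ^ 2 :=
          Finset.sum_le_sum fun q hq => hmax q hq
      _ = ((m * m - m : ℕ) : ℝ) * (g p.1 p.2) ^ 2 := by
          rw [Finset.sum_const, hcard, nsmul_eq_mul]
      _ = ((m : ℝ) * m - m) * (g p.1 p.2) ^ 2 := by
          congr 1
          push_cast [Nat.cast_sub (Nat.le_mul_of_pos_left m hm0)]
          ring
  -- combine
  have hM : (2 : ℝ) ≤ (m : ℝ) := by exact_mod_cast hm2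
  have hN : (1 : ℝ) ≤ (n : ℝ) := by exact_mod_cast hn0
  have hNM : (n : ℝ) + 1 ≤ (m : ℝ) := by exact_mod_cast hmn
  have hkey : ((m : ℝ) - n) / (n * ((m : ℝ) - 1)) ≤ (g p.1 p.2) ^ 2 := by
    rw [div_le_iff₀ (by nlinarith)]
    have h7 : (m : ℝ) ^ 2 ≤ (n : ℝ) * ((m : ℝ) + ((m : ℝ) * m - m) * (g p.1 p.2) ^ 2) := by
      calc (m : ℝ) ^ 2 ≤ (n : ℝ) * ∑ i, ∑ j, (g i j) ^ 2 := h5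
        _ ≤ _ := by
            rw [hsplit]
            exact mul_le_mul_of_nonneg_left (by linarith [h6]) (Nat.cast_nonneg n)
    nlinarith [sq_nonneg (g p.1 p.2)]
  calc Real.sqrt (((m : ℝ) - n) / (n * ((m : ℝ) - 1)))
      ≤ Real.sqrt ((g p.1 p.2) ^ 2) := Real.sqrt_le_sqrt hkey
    _ = |g p.1 p.2| := Real.sqrt_sq_eq_abs _
end

section
/- Let h ∈ ℝ^m have independent coordinates where each h_j takes values in [0, l_j] with P(h_j = 0) = 1 − p_j and mean E[h_j] = p_j μ_j. Let W ∈ ℝ^{m×n}, a_{ij} = Wᵢᵀ Wⱼ − [i = j], x = Wᵀ h, and ĥᵢ = max(0, Wᵢᵀ x + bᵢ) with bᵢ = −Σⱼ a_{ij} p_j μ_j. Then for all δ ≥ 0, P((1/m)‖ĥ − h‖₁ ≤ δ) ≥ 1 − Σᵢ [exp(−2δ²/(Σⱼ a_{ij}² l_j²)) + exp(−2δ²/(Σⱼ a_{ij}² l_j²))] = 1 − 2 Σᵢ exp(−2δ²/(Σⱼ a_{ij}² l_j²)). -/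
/-!
Because the coordinates of `h` are nonnegative and ReLU is 1-Lipschitz, the identity
`Wᵢᵀ x + bᵢ = hᵢ + zᵢ` with `zᵢ = ∑ⱼ aᵢⱼ (hⱼ - E hⱼ)` gives `|ĥᵢ - hᵢ| ≤ |zᵢ|`. Each `zᵢ` is a
weighted sum of independent centred variables of ranges `lⱼ`, so Hoeffding's inequality bounds
`P(|zᵢ| ≥ δ)` by `2 exp (-2δ² / ∑ⱼ aᵢⱼ² lⱼ²)`, and a union bound over `i` concludes.
-/

open MeasureTheory ProbabilityTheory Real

section Hoeffding

variable {Ω ι : Type*} [MeasurableSpace Ω] {μ : Measure Ω} [IsProbabilityMeasure μ] [Fintype ι]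
  {X : ι → Ω → ℝ} {lo hi : ι → ℝ}

lemma measureReal_le_sum_mul_sub_integral_le (hX : ∀ j, AEMeasurable (X j) μ)
    (hindep : iIndepFun X μ) (hbound : ∀ j, ∀ᵐ ω ∂μ, X j ω ∈ Set.Icc (lo j) (hi j))
    (w : ι → ℝ) {ε : ℝ} (hε : 0 ≤ ε) :
    μ.real {ω | ε ≤ ∑ j, w j * (X j ω - μ[X j])} ≤
      exp (-2 * ε ^ 2 / ∑ j, w j ^ 2 * (hi j - lo j) ^ 2) := by
  have hindep' : iIndepFun (fun j ω ↦ w j * (X j ω - μ[X j])) μ :=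
    hindep.comp (fun j y ↦ w j * (y - ∫ ω, X j ω ∂μ))
      (fun j ↦ (measurable_id.sub_const _).const_mul _)
  have hsubG := fun j (_ : j ∈ Finset.univ) ↦
    (hasSubgaussianMGF_of_mem_Icc (hX j) (hbound j)).const_mul (w j)
  refine (HasSubgaussianMGF.measure_sum_ge_le_of_iIndepFun hindep' hsubG hε).trans_eq ?_
  have hproxy (j : ι) : ((⟨w j ^ 2, sq_nonneg _⟩ * (‖hi j - lo j‖₊ / 2) ^ 2 : NNReal) : ℝ) =
      w j ^ 2 * (hi j - lo j) ^ 2 / 4 := by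
    -- `simp` does not see through the anonymous constructor produced by `const_mul`.
    change w j ^ 2 * (((‖hi j - lo j‖₊ / 2) ^ 2 : NNReal) : ℝ) = _
    simp only [div_pow, NNReal.coe_div, NNReal.coe_pow, coe_nnnorm, norm_eq_abs, sq_abs,
      NNReal.coe_ofNat]
    ring
  simp only [NNReal.coe_sum, hproxy, ← Finset.sum_div]
  congr 1
  field_simp
  ring

lemma measureReal_le_abs_sum_mul_sub_integral_le (hX : ∀ j, AEMeasurable (X j) μ)
    (hindep : iIndepFun X μ) (hbound : ∀ j, ∀ᵐ ω ∂μ, X j ω ∈ Set.Icc (lo j) (hi j))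
    (w : ι → ℝ) {ε : ℝ} (hε : 0 ≤ ε) :
    μ.real {ω | ε ≤ |∑ j, w j * (X j ω - μ[X j])|} ≤
      2 * exp (-2 * ε ^ 2 / ∑ j, w j ^ 2 * (hi j - lo j) ^ 2) := by
  have hsplit : {ω | ε ≤ |∑ j, w j * (X j ω - μ[X j])|} ⊆
      {ω | ε ≤ ∑ j, w j * (X j ω - μ[X j])} ∪ {ω | ε ≤ ∑ j, -w j * (X j ω - μ[X j])} := by
    intro ω hω
    simp only [neg_mul, Finset.sum_neg_distrib, Set.mem_union, Set.mem_ofPred_eq] at hω ⊢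
    exact le_abs.mp hω
  calc μ.real {ω | ε ≤ |∑ j, w j * (X j ω - μ[X j])|}
      ≤ μ.real {ω | ε ≤ ∑ j, w j * (X j ω - μ[X j])}
        + μ.real {ω | ε ≤ ∑ j, -w j * (X j ω - μ[X j])} :=
        (measureReal_mono hsplit).trans (measureReal_union_le _ _)
    _ ≤ 2 * exp (-2 * ε ^ 2 / ∑ j, w j ^ 2 * (hi j - lo j) ^ 2) := by
        have hneg := measureReal_le_sum_mul_sub_integral_le hX hindep hbound (-w) hε
        simp only [Pi.neg_apply, neg_sq] at hneg
        linarith [measureReal_le_sum_mul_sub_integral_le hX hindep hbound w hε]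

end Hoeffding

lemma sum_mul_transpose_mulVec_sub_sum_mul {ι κ : Type*} [Fintype ι] [Fintype κ] [DecidableEq ι]
    (W : Matrix ι κ ℝ) {a : ι → ι → ℝ}
    (ha : ∀ i j, a i j = (∑ k, W i k * W j k) - if i = j then 1 else 0) (v c : ι → ℝ) (i : ι) :
    ∑ k, W i k * (W.transpose.mulVec v) k - ∑ j, a i j * c j = v i + ∑ j, a i j * (v j - c j) := by
  have hgram : ∑ k, W i k * (W.transpose.mulVec v) k =
      ∑ j, (a i j + if i = j then 1 else 0) * v j := by
    simp only [ha, sub_add_cancel, Matrix.mulVec, dotProduct, Matrix.transpose_apply,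
      Finset.mul_sum, Finset.sum_mul]
    rw [Finset.sum_comm]
    simp only [mul_assoc]
  simp only [hgram, add_mul, ite_mul, one_mul, zero_mul, Finset.sum_add_distrib,
    Finset.sum_ite_eq, Finset.mem_univ, ↓reduceIte, mul_sub, Finset.sum_sub_distrib]
  ring

lemma abs_max_zero_add_sub_le {α : Type*} [AddCommGroup α] [LinearOrder α] [IsOrderedAddMonoid α]
    {y : α} (hy : 0 ≤ y) (z : α) : |max 0 (y + z) - y| ≤ |z| :=
  calc |max 0 (y + z) - y| = |max (y + z) 0 - max y 0| := by rw [max_comm, max_eq_left hy]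
    _ ≤ |y + z - y| := abs_max_sub_max_le_abs _ _ _
    _ = |z| := by rw [add_sub_cancel_left]

lemma one_div_card_mul_sum_le {ι : Type*} [Fintype ι] {f : ι → ℝ} {δ : ℝ} (hδ : 0 ≤ δ)
    (hf : ∀ i, f i ≤ δ) : (1 / Fintype.card ι : ℝ) * ∑ i, f i ≤ δ := by
  calc (1 / Fintype.card ι : ℝ) * ∑ i, f i ≤ (1 / Fintype.card ι : ℝ) * ∑ _i : ι, δ := by
        gcongr with i; exact hf i
    _ ≤ δ := by
        rcases eq_or_ne (Fintype.card ι : ℝ) 0 with hcard | hcard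
        · simp [hcard, hδ]
        · simp [field]

lemma one_sub_sum_measureReal_compl_le_measureReal_iInter {Ω ι : Type*} [MeasurableSpace Ω]
    {μ : Measure Ω} [IsProbabilityMeasure μ] [Fintype ι] (s : ι → Set Ω) :
    1 - ∑ i, μ.real (s i)ᶜ ≤ μ.real (⋂ i, s i) := by
  have hsplit : 1 ≤ μ.real (⋂ i, s i) + μ.real (⋂ i, s i)ᶜ := by
    have := measureReal_union_le (μ := μ) (⋂ i, s i) (⋂ i, s i)ᶜ
    rwa [Set.union_compl_self, probReal_univ] at this
  have hunion : μ.real (⋂ i, s i)ᶜ ≤ ∑ i, μ.real (s i)ᶜ := by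
    rw [Set.compl_iInter]
    exact measureReal_iUnion_fintype_le _
  linarith

theorem continuous_signal_recovery_general {Ω : Type*} [MeasurableSpace Ω]
    (μ : Measure Ω) [IsProbabilityMeasure μ]
    {m n : ℕ} (W : Matrix (Fin m) (Fin n) ℝ)
    (h : Fin m → Ω → ℝ) (hmeas : ∀ j, Measurable (h j))
    (hindep : iIndepFun h μ)
    (l : Fin m → ℝ)
    (hbound : ∀ j ω, h j ω ∈ Set.Icc 0 (l j))
    (p : Fin m → ℝ)
    (μc : Fin m → ℝ) (hmean : ∀ j, ∫ ω, h j ω ∂μ = p j * μc j)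
    (a : Fin m → Fin m → ℝ)
    (ha : ∀ i j, a i j = (∑ k, W i k * W j k) - if i = j then 1 else 0)
    (b : Fin m → ℝ) (hb : ∀ i, b i = -∑ j, a i j * (p j * μc j))
    (x : Ω → Fin n → ℝ) (hx : ∀ ω, x ω = W.transpose.mulVec (fun j => h j ω))
    (hhat : Fin m → Ω → ℝ)
    (hhat_def : ∀ i ω, hhat i ω = max 0 (∑ k, W i k * x ω k + b i))
    (δ : ℝ) (hδ : 0 ≤ δ) :
    1 - 2 * ∑ i, Real.exp (-2 * δ ^ 2 / ∑ j, (a i j) ^ 2 * (l j) ^ 2) ≤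
      (μ {ω | (1 / m : ℝ) * ∑ i, |hhat i ω - h i ω| ≤ δ}).toReal := by
  set z : Fin m → Ω → ℝ := fun i ω ↦ ∑ j, a i j * (h j ω - μ[h j])
  have hrecovery (i : Fin m) (ω : Ω) : |hhat i ω - h i ω| ≤ |z i ω| := by
    have hpreactivation : ∑ k, W i k * x ω k + b i = h i ω + z i ω := by
      rw [hx, hb, ← sub_eq_add_neg]
      simp only [← hmean]
      exact sum_mul_transpose_mulVec_sub_sum_mul W ha _ _ i
    rw [hhat_def, hpreactivation]
    exact abs_max_zero_add_sub_le (hbound i ω).1 _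
  have hevent : ⋂ i, {ω | |z i ω| ≤ δ} ⊆
      {ω | (1 / m : ℝ) * ∑ i, |hhat i ω - h i ω| ≤ δ} := fun ω hω ↦ by
    rw [Set.mem_iInter] at hω
    simpa using one_div_card_mul_sum_le hδ fun i ↦ (hrecovery i ω).trans (hω i)
  have htail (i : Fin m) :
      μ.real {ω | |z i ω| ≤ δ}ᶜ ≤ 2 * exp (-2 * δ ^ 2 / ∑ j, a i j ^ 2 * l j ^ 2) := by
    have hoeffding := measureReal_le_abs_sum_mul_sub_integral_le
      (fun j ↦ (hmeas j).aemeasurable) hindep (fun j ↦ ae_of_all _ (hbound j)) (a i) hδ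
    simp only [sub_zero] at hoeffding
    refine (measureReal_mono fun ω hω ↦ ?_).trans hoeffding
    simp only [Set.mem_compl_iff, Set.mem_ofPred_eq, not_le] at hω ⊢
    exact hω.le
  calc 1 - 2 * ∑ i, exp (-2 * δ ^ 2 / ∑ j, a i j ^ 2 * l j ^ 2)
      ≤ 1 - ∑ i, μ.real {ω | |z i ω| ≤ δ}ᶜ := by
        rw [Finset.mul_sum]
        gcongr with i
        exact htail i
    _ ≤ μ.real (⋂ i, {ω | |z i ω| ≤ δ}) := one_sub_sum_measureReal_compl_le_measureReal_iInter _
    _ ≤ _ := measureReal_mono hevent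

/-- Weakened noiseless continuous signal recovery by a ReLU auto-encoder. -/
theorem continuous_signal_recovery {Ω : Type*} [MeasurableSpace Ω]
    (μ : Measure Ω) [IsProbabilityMeasure μ]
    {m n : ℕ} (hm : 0 < m) (W : Matrix (Fin m) (Fin n) ℝ)
    (h : Fin m → Ω → ℝ) (hmeas : ∀ j, Measurable (h j))
    (hindep : iIndepFun h μ)
    (l : Fin m → ℝ) (hl : ∀ j, 0 < l j)
    (hbound : ∀ j ω, h j ω ∈ Set.Icc 0 (l j))
    (p : Fin m → ℝ) (hp : ∀ j, p j ∈ Set.Icc (0 : ℝ) 1)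
    (hzero : ∀ j, μ {ω | h j ω = 0} = ENNReal.ofReal (1 - p j))
    (μc : Fin m → ℝ) (hmean : ∀ j, ∫ ω, h j ω ∂μ = p j * μc j)
    (a : Fin m → Fin m → ℝ)
    (ha : ∀ i j, a i j = (∑ k, W i k * W j k) - if i = j then 1 else 0)
    (b : Fin m → ℝ) (hb : ∀ i, b i = -∑ j, a i j * (p j * μc j))
    (x : Ω → Fin n → ℝ) (hx : ∀ ω, x ω = W.transpose.mulVec (fun j => h j ω))
    (hhat : Fin m → Ω → ℝ)
    (hhat_def : ∀ i ω, hhat i ω = max 0 (∑ k, W i k * x ω k + b i))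
    (δ : ℝ) (hδ : 0 ≤ δ) :
    1 - 2 * ∑ i, Real.exp (-2 * δ ^ 2 / ∑ j, (a i j) ^ 2 * (l j) ^ 2) ≤
      (μ {ω | (1 / m : ℝ) * ∑ i, |hhat i ω - h i ω| ≤ δ}).toReal :=
  continuous_signal_recovery_general μ W h hmeas hindep l hbound p μc hmean a ha b hb x hx hhat
    hhat_def δ hδ
end
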